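/- Let A ∈ B(H) and φ an Orlicz function. Then φ(w(A)²) ≤ (1/4)·‖φ(|A|²) + φ(|A*|²)‖ + (1/2)·φ(w(A²)). -/

import Mathlib

/-- An Orlicz function: convex, continuous, non-decreasing on `[0, ∞)`,
vanishing at `0`, positive on `(0, ∞)`, and tending to infinity. -/
def IsOrliczFunction (φ : ℝ → ℝ) : Prop :=
  ConvexOn ℝ (Set.Ici 0) φ ∧ ContinuousOn φ (Set.Ici 0) ∧ MonotoneOn φ (Set.Ici 0) ∧
    φ 0 = 0 ∧ (∀ u : ℝ, 0 < u → 0 < φ u) ∧ Filter.Tendsto φ Filter.atTop Filter.atTop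

/-- The numerical radius of a bounded operator on a complex Hilbert space. -/
noncomputable def numRad {H : Type*} [NormedAddCommGroup H] [InnerProductSpace ℂ H]
    (A : H →L[ℂ] H) : ℝ :=
  ⨆ x : {x : H // ‖x‖ = 1}, ‖(inner ℂ (A x.1) x.1 : ℂ)‖

/-- The modulus `|A| = (A*A)^{1/2}`, via continuous functional calculus. -/
noncomputable def absOp {H : Type*} [NormedAddCommGroup H] [InnerProductSpace ℂ H]
    [CompleteSpace H] (A : H →L[ℂ] H) : H →L[ℂ] H :=
  cfc Real.sqrt (ContinuousLinearMap.adjoint A * A)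

variable {H : Type*} [NormedAddCommGroup H] [InnerProductSpace ℂ H] [CompleteSpace H]

/-!
Fix a unit vector `x`. Buzano's inequality `|⟪u, e⟫⟪e, v⟫| ≤ (‖u‖‖v‖ + |⟪u, v⟫|) / 2` with
`u = A x`, `v = A* x`, `e = x`, together with AM–GM, gives
`|⟪A x, x⟫|² ≤ ((‖A x‖² + ‖A* x‖²) / 2 + w(A²)) / 2`.
Applying the increasing convex `φ` and convexity twice bounds `φ(|⟪A x, x⟫|²)` by
`(φ ⟪|A|² x, x⟫ + φ ⟪|A*|² x, x⟫) / 4 + φ(w(A²)) / 2`. Jensen's operator inequality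
`φ ⟪T x, x⟫ ≤ ⟪φ(T) x, x⟫` for `T ≥ 0` holds because `φ` is the supremum of its affine minorants on
`[0, ∞)`, and each affine minorant `ℓ` satisfies `ℓ ⟪T x, x⟫ = ⟪ℓ(T) x, x⟫ ≤ ⟪φ(T) x, x⟫`.
Finally `w(A)` lies in the closure of the values `|⟪A x, x⟫|`, so continuity of `φ` passes the
bound to the supremum.
-/

open ContinuousLinearMap RCLike Set
open scoped InnerProductSpace

section Buzano

variable {𝕜 E : Type*} [RCLike 𝕜] [NormedAddCommGroup E] [InnerProductSpace 𝕜 E]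

theorem norm_inner_mul_inner_le_of_norm_eq_one {e : E} (he : ‖e‖ = 1) (u v : E) :
    ‖⟪u, e⟫_𝕜 * ⟪e, v⟫_𝕜‖ ≤ (‖u‖ * ‖v‖ + ‖⟪u, v⟫_𝕜‖) / 2 := by
  let w := (𝕜 ∙ e).reflection u
  have hw : ⟪w, v⟫_𝕜 = 2 * (⟪u, e⟫_𝕜 * ⟪e, v⟫_𝕜) - ⟪u, v⟫_𝕜 := by
    simp only [w, Submodule.reflection_apply, Submodule.starProjection_unit_singleton 𝕜 he,
      inner_sub_left, two_smul, inner_add_left, inner_smul_left, inner_conj_symm]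
    ring
  have h2 : ‖(2 : 𝕜) * (⟪u, e⟫_𝕜 * ⟪e, v⟫_𝕜)‖ ≤ ‖u‖ * ‖v‖ + ‖⟪u, v⟫_𝕜‖ := by
    calc ‖(2 : 𝕜) * (⟪u, e⟫_𝕜 * ⟪e, v⟫_𝕜)‖ = ‖⟪w, v⟫_𝕜 + ⟪u, v⟫_𝕜‖ := by
          rw [hw, sub_add_cancel]
      _ ≤ ‖w‖ * ‖v‖ + ‖⟪u, v⟫_𝕜‖ :=
          (norm_add_le _ _).trans (by gcongr; exact norm_inner_le_norm _ _)
      _ = ‖u‖ * ‖v‖ + ‖⟪u, v⟫_𝕜‖ := by rw [LinearIsometryEquiv.norm_map]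
  rw [norm_mul, RCLike.norm_two] at h2
  linarith

end Buzano

namespace ContinuousLinearMap

variable {𝕜 E : Type*} [RCLike 𝕜] [NormedAddCommGroup E] [InnerProductSpace 𝕜 E]

theorem norm_inner_apply_self_le_opNorm (T : E →L[𝕜] E) {x : E} (hx : ‖x‖ = 1) :
    ‖⟪T x, x⟫_𝕜‖ ≤ ‖T‖ := by
  calc ‖⟪T x, x⟫_𝕜‖ ≤ ‖T x‖ * ‖x‖ := norm_inner_le_norm _ _
    _ ≤ ‖T‖ * ‖x‖ * ‖x‖ := by gcongr; exact T.le_opNorm x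
    _ = ‖T‖ := by rw [hx, mul_one, mul_one]

theorem re_inner_le_re_inner_of_le {S T : E →L[𝕜] E} (h : S ≤ T) (x : E) :
    re ⟪S x, x⟫_𝕜 ≤ re ⟪T x, x⟫_𝕜 := by
  have := ((le_def S T).1 h).re_inner_nonneg_left x
  rwa [sub_apply, inner_sub_left, map_sub, sub_nonneg] at this

theorem re_inner_adjoint_mul_self_apply [CompleteSpace E] (A : E →L[𝕜] E) (x : E) :
    re ⟪(adjoint A * A) x, x⟫_𝕜 = ‖A x‖ ^ 2 :=
  (apply_norm_sq_eq_inner_adjoint_left A x).symm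

theorem re_inner_mul_adjoint_self_apply [CompleteSpace E] (A : E →L[𝕜] E) (x : E) :
    re ⟪(A * adjoint A) x, x⟫_𝕜 = ‖adjoint A x‖ ^ 2 := by
  rw [mul_apply_eq_comp, ← adjoint_inner_right, inner_self_eq_norm_sq]

theorem norm_inner_apply_self_sq_le [CompleteSpace E] (A : E →L[𝕜] E) {x : E} (hx : ‖x‖ = 1) :
    ‖⟪A x, x⟫_𝕜‖ ^ 2 ≤ (‖A x‖ ^ 2 + ‖adjoint A x‖ ^ 2) / 4 + ‖⟪(A * A) x, x⟫_𝕜‖ / 2 := by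
  have hbuzano := norm_inner_mul_inner_le_of_norm_eq_one (𝕜 := 𝕜) hx (A x) (adjoint A x)
  rw [adjoint_inner_right, adjoint_inner_right, norm_mul, ← sq] at hbuzano
  rw [mul_apply_eq_comp]
  nlinarith [sq_nonneg (‖A x‖ - ‖adjoint A x‖)]

end ContinuousLinearMap

theorem ConvexOn.map_add_div_two_le {s : Set ℝ} {φ : ℝ → ℝ} (hφ : ConvexOn ℝ s φ) {a b : ℝ}
    (ha : a ∈ s) (hb : b ∈ s) : φ ((a + b) / 2) ≤ (φ a + φ b) / 2 := by
  have h := hφ.2 ha hb (by norm_num : (0 : ℝ) ≤ 1 / 2) (by norm_num : (0 : ℝ) ≤ 1 / 2) (by norm_num)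
  rw [smul_eq_mul, smul_eq_mul, smul_eq_mul, smul_eq_mul] at h
  rw [show (a + b) / 2 = 1 / 2 * a + 1 / 2 * b by ring]
  linarith

theorem ConvexOn.map_re_inner_le_re_inner_cfc {φ : ℝ → ℝ} (hφ : ConvexOn ℝ (Ici 0) φ)
    (hφc : ContinuousOn φ (Ici 0)) {T : H →L[ℂ] H} (hT : 0 ≤ T) {x : H} (hx : ‖x‖ = 1) :
    φ (re ⟪T x, x⟫_ℂ) ≤ re ⟪cfc φ T x, x⟫_ℂ := by
  have hspec : spectrum ℝ T ⊆ Ici 0 := fun t ht => spectrum_nonneg_of_nonneg hT ht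
  refine le_of_forall_lt_imp_le_of_dense fun a ha => ?_
  obtain ⟨c, c', hle, rfl⟩ := hφ.exists_affine_le_of_lt_real
    (((nonneg_iff_isPositive T).1 hT).re_inner_nonneg_left x) ha isClosed_Ici
    hφc.lowerSemicontinuousOn
  have hcfc : cfc (fun t => c * t + c') T ≤ cfc φ T :=
    cfc_mono (fun t ht => hle t (hspec ht)) (by fun_prop) (hφc.mono hspec)
  rw [cfc_add .., cfc_const_mul .., cfc_id' ℝ T, cfc_const c' T] at hcfc
  refine (re_inner_le_re_inner_of_le hcfc x).trans' (le_of_eq ?_)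
  rw [add_apply, smul_apply, Algebra.algebraMap_eq_smul_one, smul_apply, one_apply_eq_self,
    inner_add_left, inner_smul_left_eq_smul, inner_smul_left_eq_smul, map_add, smul_re, smul_re,
    inner_self_eq_norm_sq, hx, one_pow, mul_one]

section NumericalRadius

variable {E : Type*} [NormedAddCommGroup E] [InnerProductSpace ℂ E]

theorem numRad_bddAbove (A : E →L[ℂ] E) :
    BddAbove (range fun x : {x : E // ‖x‖ = 1} => ‖⟪A x, x⟫_ℂ‖) :=
  ⟨‖A‖, by rintro _ ⟨x, rfl⟩; exact norm_inner_apply_self_le_opNorm A x.2⟩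

theorem norm_inner_le_numRad (A : E →L[ℂ] E) {x : E} (hx : ‖x‖ = 1) : ‖⟪A x, x⟫_ℂ‖ ≤ numRad A :=
  le_ciSup (numRad_bddAbove A) ⟨x, hx⟩

theorem numRad_nonneg (A : E →L[ℂ] E) : 0 ≤ numRad A :=
  Real.iSup_nonneg fun _ => norm_nonneg _

theorem apply_numRad_le {g : ℝ → ℝ} (hg : ContinuousOn g (Ici 0)) (A : E →L[ℂ] E) {K : ℝ}
    (h0 : g 0 ≤ K) (h : ∀ x : E, ‖x‖ = 1 → g ‖⟪A x, x⟫_ℂ‖ ≤ K) : g (numRad A) ≤ K := by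
  rcases isEmpty_or_nonempty {x : E // ‖x‖ = 1} with hE | hne
  · rwa [numRad, Real.iSup_of_isEmpty]
  have hclosed : IsClosed (Ici 0 ∩ g ⁻¹' Iic K) :=
    hg.preimage_isClosed_of_isClosed isClosed_Ici isClosed_Iic
  have hsub : range (fun x : {x : E // ‖x‖ = 1} => ‖⟪A x, x⟫_ℂ‖) ⊆ Ici 0 ∩ g ⁻¹' Iic K := by
    rintro _ ⟨x, rfl⟩
    exact ⟨norm_nonneg _, h x.1 x.2⟩
  exact (hclosed.closure_subset_iff.2 hsub (csSup_mem_closure (range_nonempty _)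
    (numRad_bddAbove A))).2

end NumericalRadius

theorem ConvexOn.apply_norm_inner_sq_le {φ : ℝ → ℝ} (hφ : ConvexOn ℝ (Ici 0) φ)
    (hφc : ContinuousOn φ (Ici 0)) (hφm : MonotoneOn φ (Ici 0)) (A : H →L[ℂ] H) {x : H}
    (hx : ‖x‖ = 1) :
    φ (‖⟪A x, x⟫_ℂ‖ ^ 2) ≤ (1 / 4) * ‖cfc φ (adjoint A * A) + cfc φ (A * adjoint A)‖ +
      (1 / 2) * φ (numRad (A * A)) := by
  have hAstarA := hφ.map_re_inner_le_re_inner_cfc hφc (star_mul_self_nonneg A) hx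
  have hAAstar := hφ.map_re_inner_le_re_inner_cfc hφc (mul_star_self_nonneg A) hx
  rw [star_eq_adjoint, re_inner_adjoint_mul_self_apply] at hAstarA
  rw [star_eq_adjoint, re_inner_mul_adjoint_self_apply] at hAAstar
  have hnum := norm_inner_le_numRad (A * A) hx
  have hbuzano := norm_inner_apply_self_sq_le A hx
  have hst : (‖A x‖ ^ 2 + ‖adjoint A x‖ ^ 2) / 2 ∈ Ici (0 : ℝ) := mem_Ici.2 (by positivity)
  calc φ (‖⟪A x, x⟫_ℂ‖ ^ 2)
      ≤ φ (((‖A x‖ ^ 2 + ‖adjoint A x‖ ^ 2) / 2 + numRad (A * A)) / 2) :=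
        hφm (mem_Ici.2 (sq_nonneg _))
          (mem_Ici.2 (by linarith [numRad_nonneg (A * A), mem_Ici.1 hst])) (by linarith)
    _ ≤ ((φ (‖A x‖ ^ 2) + φ (‖adjoint A x‖ ^ 2)) / 2 + φ (numRad (A * A))) / 2 := by
        refine (hφ.map_add_div_two_le hst (numRad_nonneg _)).trans ?_
        gcongr
        exact hφ.map_add_div_two_le (mem_Ici.2 (sq_nonneg _)) (mem_Ici.2 (sq_nonneg _))
    _ ≤ (1 / 4) * re ⟪(cfc φ (adjoint A * A) + cfc φ (A * adjoint A)) x, x⟫_ℂ +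
          (1 / 2) * φ (numRad (A * A)) := by
        rw [add_apply, inner_add_left, map_add]
        linarith
    _ ≤ _ := by
        gcongr
        exact (re_le_norm _).trans (norm_inner_apply_self_le_opNorm _ hx)

theorem stmt14 (A : H →L[ℂ] H) (φ : ℝ → ℝ) (hφ : IsOrliczFunction φ) :
    φ (numRad A ^ 2) ≤
      (1 / 4) * ‖cfc φ (ContinuousLinearMap.adjoint A * A) +
        cfc φ (A * ContinuousLinearMap.adjoint A)‖ + (1 / 2) * φ (numRad (A * A)) := by
  obtain ⟨hconv, hcont, hmono, hzero, -, -⟩ := hφ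
  refine apply_numRad_le (g := fun r => φ (r ^ 2))
    (hcont.comp (continuous_pow 2).continuousOn fun r _ => sq_nonneg r) A ?_
    fun x hx => hconv.apply_norm_inner_sq_le hcont hmono A hx
  have hφu : 0 ≤ φ (numRad (A * A)) :=
    hzero ▸ hmono self_mem_Ici (numRad_nonneg (A * A)) (numRad_nonneg (A * A))
  rw [zero_pow two_ne_zero, hzero]
  exact add_nonneg (by positivity) (mul_nonneg (by norm_num) hφu)
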